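/- In the rank-3 alternating matroid on elements x₀,…,x_{p−1} (with χ(x_i,x_j,x_k) = + for i < j < k), extended simply by an element e, let V_i (i = 0,…,p−1, indices mod p) be the cocircuit with V_i(x_i) = V_i(x_{i+1}) = 0 and V_i(x) = + for all other x among the x_j. Then the cyclic sign sequence V₀(e), V₁(e), …, V_{p−1}(e) has at most one maximal block of +'s and at most one maximal block of −'s (possibly separated by single zeros); i.e., it is of one of the forms +⋯+−⋯−+⋯+, +⋯+0−⋯−+⋯+, +⋯+−⋯−0+⋯+, +⋯+0−⋯−0+⋯+, or the negations of these. -/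

import Mathlib

/-- Chirotope axioms (B1)-(B3) for a map `χ : E^r → {−1,0,1}` (values in ℤ). -/
def IsChirotope {E : Type*} {r : ℕ} (χ : (Fin r → E) → ℤ) : Prop :=
  (∀ t, χ t = 1 ∨ χ t = 0 ∨ χ t = -1) ∧
  (∃ t, χ t ≠ 0) ∧
  (∀ (t : Fin r → E) (τ : Equiv.Perm (Fin r)), χ (t ∘ ⇑τ) = ((Equiv.Perm.sign τ : ℤˣ) : ℤ) * χ t) ∧
  (∀ (i₀ : Fin r) (x y : Fin r → E),
    (∀ s : Fin r, 0 ≤ χ (Function.update x i₀ (y s)) * χ (Function.update y s (x i₀))) →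
    0 ≤ χ x * χ y)

/-- Cocircuits of the oriented matroid with chirotope `χ`: the nonzero sign vectors of the
form `x ↦ χ(t₁,…,x,…,t_r)`. -/
def IsCocircuit {E : Type*} {r : ℕ} (χ : (Fin r → E) → ℤ) (c : E → ℤ) : Prop :=
  c ≠ 0 ∧ ∃ (i : Fin r) (t : Fin r → E), c = fun x => χ (Function.update t i x)

/-- Circuits of the oriented matroid with chirotope `χ`. -/
def IsCircuit {E : Type*} {r : ℕ} (χ : (Fin r → E) → ℤ) (c : E → ℤ) : Prop :=
  c ≠ 0 ∧ ∃ t : Fin (r + 1) → E,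
    (∀ i, c (t i) = (-1) ^ (i : ℕ) * χ (fun j => t (i.succAbove j))) ∧
    (∀ x, (∀ i, t i ≠ x) → c x = 0)

/-- Closure of a set of sign vectors under composition `X ∘ Y`. -/
inductive SignComp {E : Type*} (B : (E → ℤ) → Prop) : (E → ℤ) → Prop
  | zero : SignComp B 0
  | base (c : E → ℤ) : B c → SignComp B c
  | comp (X Y : E → ℤ) : SignComp B X → SignComp B Y →
      SignComp B (fun e => if X e = 0 then Y e else X e)

/-- Covectors: compositions of cocircuits. -/
def IsCovector {E : Type*} {r : ℕ} (χ : (Fin r → E) → ℤ) : (E → ℤ) → Prop :=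
  SignComp (IsCocircuit χ)

/-- Vectors: compositions of circuits. -/
def IsVector {E : Type*} {r : ℕ} (χ : (Fin r → E) → ℤ) : (E → ℤ) → Prop :=
  SignComp (IsCircuit χ)

/-- No loops: every element lies in some basis. -/
def OMLoopless {E : Type*} {r : ℕ} (χ : (Fin r → E) → ℤ) : Prop :=
  ∀ e : E, ∃ t, χ t ≠ 0 ∧ ∃ i, t i = e

/-- Simplicity: no loops and no two distinct parallel or antiparallel elements. -/
def OMSimple {E : Type*} {r : ℕ} (χ : (Fin r → E) → ℤ) : Prop :=
  OMLoopless χ ∧ ∀ e f : E, e ≠ f → ∃ t, χ t ≠ 0 ∧ ∃ i j, i ≠ j ∧ t i = e ∧ t j = f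

/-- Acyclicity: existence of the all-positive covector. -/
def OMAcyclic {E : Type*} {r : ℕ} (χ : (Fin r → E) → ℤ) : Prop :=
  ∃ X, IsCovector χ X ∧ ∀ e, X e = 1

/-- Extreme point of an acyclic oriented matroid. -/
def IsExtremePoint {E : Type*} {r : ℕ} (χ : (Fin r → E) → ℤ) (e : E) : Prop :=
  ∃ c, IsCocircuit χ c ∧ c e = 0 ∧ ∀ f, f ≠ e → c f = 1

/-- Rotational symmetry of the oriented matroid with chirotope `χ`. -/
def IsRotSym {E : Type*} {r : ℕ} (χ : (Fin r → E) → ℤ) (σ : Equiv.Perm E) : Prop :=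
  ∀ t, χ (⇑σ ∘ t) = χ t

/-- A sign sequence on `{0,…,p−1}` of the form `+⋯+−⋯−+⋯+` with the `−`-block possibly
flanked by single zeros (all blocks possibly empty). -/
def BlockPattern (s : ℕ → ℤ) (p : ℕ) : Prop :=
  ∃ a b : ℕ, a ≤ b ∧ b ≤ p ∧ ∀ k < p,
    (k < a → s k = 1) ∧
    (a ≤ k → k ≤ b → (s k = -1 ∨ (s k = 0 ∧ (k = a ∨ k = b)))) ∧
    (b < k → s k = 1)

/-!
Put `s i = χ(xᵢ, xᵢ₊₁, e)`. The cocircuit `Vᵢ` and `χ(xᵢ, xᵢ₊₁, ·)` have the common zeros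
`xᵢ, xᵢ₊₁` and agree at `xᵢ₊₂`, so `Vᵢ(e) = s i`.

Call `m` an ascent of `s` if `s (m-1) ≤ 0 ≤ s m` and `s (m-1) < s m`; descents are ascents of `-s`.
At an ascent `m`, the three-term Grassmann–Plücker relation centred at `xₘ` for
`xₘ₊₁, xⱼ, xₘ₋₁, e` (the three brackets among the `x`'s being `+`) forces `χ(xₘ, xⱼ, e) > 0` for
every `j` at cyclic distance at least two from `m`. Two such ascents `m, m'` would give both
`χ(xₘ, xₘ', e) > 0` and `χ(xₘ', xₘ, e) > 0`, so all ascents, and likewise all descents, are within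
cyclic distance one of each other. Two consecutive zeros `s m = s (m+1) = 0` would make
`χ(xₘ₊₁, e, ·)` vanish on the basis `xₘ, xₘ₊₁, xₘ₊₂`, i.e. `e` parallel to `xₘ₊₁`, contradicting
simplicity.

A cyclic `{-1, 0, 1}`-sequence with these three properties has the block form. Up to replacing
`s` by `-s`, `s 0 > 0` or `s (p-1) > 0`, so the run from the first to the last non-positive entry
is entered through a descent or left through an ascent; a non-negative entry inside that run
would create a descent and an ascent inside it, one of them far from that boundary transition.
-/

namespace IsChirotope

variable {E : Type*} {χ : (Fin 3 → E) → ℤ}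

theorem swap_zero_one (hχ : IsChirotope χ) (a b c : E) : χ ![b, a, c] = -χ ![a, b, c] := by
  have h := hχ.2.2.1 ![a, b, c] (Equiv.swap 0 1)
  rw [Equiv.Perm.sign_swap (by decide)] at h
  convert h using 2
  · ext i; fin_cases i <;> rfl
  · simp

theorem swap_one_two (hχ : IsChirotope χ) (a b c : E) : χ ![a, c, b] = -χ ![a, b, c] := by
  have h := hχ.2.2.1 ![a, b, c] (Equiv.swap 1 2)
  rw [Equiv.Perm.sign_swap (by decide)] at h
  convert h using 2
  · ext i; fin_cases i <;> rfl
  · simp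

theorem rotate (hχ : IsChirotope χ) (a b c : E) : χ ![b, c, a] = χ ![a, b, c] := by
  rw [hχ.swap_one_two, hχ.swap_zero_one, neg_neg]

theorem eq_zero_of_repeat (hχ : IsChirotope χ) (a b : E) : χ ![a, b, a] = 0 := by
  have h := hχ.swap_one_two b a a
  rw [hχ.rotate] at h
  omega

theorem exchange (hχ : IsChirotope χ) (a b c d f g : E)
    (h₀ : 0 ≤ χ ![a, b, d] * χ ![c, f, g]) (h₁ : 0 ≤ χ ![a, b, f] * χ ![d, c, g])
    (h₂ : 0 ≤ χ ![a, b, g] * χ ![d, f, c]) : 0 ≤ χ ![a, b, c] * χ ![d, f, g] := by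
  refine hχ.2.2.2 2 ![a, b, c] ![d, f, g] fun s => ?_
  fin_cases s
  · convert h₀ using 3 <;> ext i <;> fin_cases i <;> rfl
  · convert h₁ using 3 <;> ext i <;> fin_cases i <;> rfl
  · convert h₂ using 3 <;> ext i <;> fin_cases i <;> rfl

theorem three_term_pos (hχ : IsChirotope χ) {a b c d e : E}
    (hA : 0 ≤ χ ![a, b, c] * χ ![a, d, e]) (hC : 0 ≤ χ ![a, b, e] * χ ![a, c, d])
    (hne : χ ![a, b, c] * χ ![a, d, e] ≠ 0 ∨ χ ![a, b, e] * χ ![a, c, d] ≠ 0) :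
    0 < χ ![a, b, d] * χ ![a, c, e] := by
  by_contra! hB
  have hA' : 0 ≤ χ ![a, c, b] * χ ![a, d, e] := by
    refine hχ.exchange a c b a d e ?_ ?_ ?_
    · rw [hχ.eq_zero_of_repeat, zero_mul]
    · linarith [mul_comm (χ ![a, c, d]) (χ ![a, b, e])]
    · rw [hχ.swap_one_two a b d]; linarith [mul_comm (χ ![a, b, d]) (χ ![a, c, e])]
  have hC' : 0 ≤ χ ![a, e, b] * χ ![a, c, d] := by
    refine hχ.exchange a e b a c d ?_ ?_ ?_
    · rw [hχ.eq_zero_of_repeat, zero_mul]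
    · rw [hχ.swap_one_two a c e]; linarith [mul_comm (χ ![a, b, d]) (χ ![a, c, e])]
    · rw [hχ.swap_one_two a d e, hχ.swap_one_two a b c]; linarith
  rw [hχ.swap_one_two] at hA' hC'
  rcases hne with hne | hne <;> apply hne <;> linarith

theorem three_term_neg (hχ : IsChirotope χ) {a b c d e : E}
    (hA : χ ![a, b, c] * χ ![a, d, e] ≤ 0) (hC : χ ![a, b, e] * χ ![a, c, d] ≤ 0)
    (hne : χ ![a, b, c] * χ ![a, d, e] ≠ 0 ∨ χ ![a, b, e] * χ ![a, c, d] ≠ 0) :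
    χ ![a, b, d] * χ ![a, c, e] < 0 := by
  have h := hχ.three_term_pos (a := a) (b := d) (c := c) (d := b) (e := e)
  rw [hχ.swap_one_two a c d, hχ.swap_one_two a b c, hχ.swap_one_two a b d] at h
  have h' := h (by linarith) (by linarith) (by simpa [mul_comm, or_comm] using hne)
  linarith

theorem mul_nonneg_of_eq_zero (hχ : IsChirotope χ) {a b u v : E}
    (hu : χ ![a, b, u] = 0) (hv : χ ![a, b, v] = 0) {w y : E}
    (h : 0 ≤ χ ![a, b, w] * χ ![u, v, y]) : 0 ≤ χ ![a, b, y] * χ ![u, v, w] :=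
  hχ.exchange a b y u v w (by simp [hu]) (by simp [hv]) h

theorem eq_zero_of_basis (hχ : IsChirotope χ) {a b u v w : E}
    (hu : χ ![a, b, u] = 0) (hv : χ ![a, b, v] = 0) (hw : χ ![a, b, w] = 0)
    (huvw : χ ![u, v, w] ≠ 0) (y : E) : χ ![a, b, y] = 0 := by
  have h₁ := hχ.mul_nonneg_of_eq_zero hu hv (w := w) (y := y) (by simp [hw])
  have h₂ := hχ.mul_nonneg_of_eq_zero hv hu (w := w) (y := y) (by simp [hw])
  rw [hχ.swap_zero_one u v w] at h₂
  have h₀ : χ ![a, b, y] * χ ![u, v, w] = 0 := by linarith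
  exact (mul_eq_zero.1 h₀).resolve_right huvw

theorem eq_of_common_zeros (hχ : IsChirotope χ) {a b u v w : E}
    (hu : χ ![a, b, u] = 0) (hv : χ ![a, b, v] = 0) (hw : χ ![a, b, w] = 1)
    (huvw : χ ![u, v, w] = 1) (y : E) : χ ![a, b, y] = χ ![u, v, y] := by
  have hge : 0 ≤ χ ![u, v, y] → 0 ≤ χ ![a, b, y] := fun h => by
    simpa [hw, huvw] using hχ.mul_nonneg_of_eq_zero hu hv (w := w) (y := y) (by simpa [hw] using h)
  have hle : χ ![u, v, y] ≤ 0 → χ ![a, b, y] ≤ 0 := fun h => by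
    have := hχ.mul_nonneg_of_eq_zero hv hu (w := w) (y := y)
      (by rw [hw, hχ.swap_zero_one u v y]; linarith)
    rw [hχ.swap_zero_one u v w, huvw] at this
    linarith
  have hne : χ ![u, v, y] ≠ 0 → χ ![a, b, y] ≠ 0 := fun h h₀ => by
    simpa [hw] using hχ.eq_zero_of_basis hu hv h₀ h w
  rcases hχ.1 ![u, v, y] with h | h | h <;> rcases hχ.1 ![a, b, y] with h' | h' | h' <;>
    simp only [h, h'] at hge hle hne ⊢ <;> omega

theorem exists_eq_of_isCocircuit (hχ : IsChirotope χ) {c : E → ℤ} (hc : IsCocircuit χ c) :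
    ∃ a b : E, ∀ y, c y = χ ![a, b, y] := by
  obtain ⟨-, i, t, rfl⟩ := hc
  fin_cases i
  · refine ⟨t 1, t 2, fun y => ?_⟩
    dsimp only
    rw [hχ.rotate]
    congr 1; ext j; fin_cases j <;> rfl
  · refine ⟨t 2, t 0, fun y => ?_⟩
    dsimp only
    rw [← hχ.rotate]
    congr 1; ext j; fin_cases j <;> rfl
  · exact ⟨t 0, t 1, fun y => congrArg χ (by ext j; fin_cases j <;> rfl)⟩

theorem exists_ne_zero_of_omSimple (hχ : IsChirotope χ) (hs : OMSimple χ) {a b : E}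
    (hab : a ≠ b) : ∃ y, χ ![a, b, y] ≠ 0 := by
  obtain ⟨t, ht, i, j, hij, rfl, rfl⟩ := hs.2 a b hab
  obtain ⟨τ, rfl, rfl⟩ : ∃ τ : Equiv.Perm (Fin 3), τ 0 = i ∧ τ 1 = j := by
    clear ht hab; revert i j; decide
  refine ⟨t (τ 2), ?_⟩
  have : ![t (τ 0), t (τ 1), t (τ 2)] = t ∘ τ := by ext k; fin_cases k <;> rfl
  rw [this, hχ.2.2.1]
  exact mul_ne_zero (Units.ne_zero _) ht

end IsChirotope

section Cyclic

variable {p : ℕ} [NeZero p]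

def IsAscent (s : Fin p → ℤ) (m : Fin p) : Prop :=
  s (m - 1) ≤ 0 ∧ 0 ≤ s m ∧ s (m - 1) < s m

def CyclicallyClose (m m' : Fin p) : Prop :=
  m' = m - 1 ∨ m' = m ∨ m' = m + 1

theorem CyclicallyClose.symm {m m' : Fin p} (h : CyclicallyClose m m') : CyclicallyClose m' m := by
  unfold CyclicallyClose at *
  rcases h with rfl | rfl | rfl
  · exact Or.inr (Or.inr (sub_add_cancel m 1).symm)
  · exact Or.inr (Or.inl rfl)
  · exact Or.inl (add_sub_cancel_right m 1).symm

theorem val_add_one_sub_self (hp : 2 ≤ p) (m : Fin p) : ((m + 1) - m).val = 1 := by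
  rw [add_sub_cancel_left, Fin.val_one', Nat.mod_eq_of_lt hp]

theorem val_sub_one_sub_self (hp : 2 ≤ p) (m : Fin p) : ((m - 1) - m).val = p - 1 := by
  rw [sub_sub_cancel_left, Fin.val_neg', Fin.val_one', Nat.mod_eq_of_lt hp,
    Nat.mod_eq_of_lt (by omega)]

theorem add_one_ne_self (hp : 2 ≤ p) (m : Fin p) : m + 1 ≠ m := fun h => by
  simpa [h] using val_add_one_sub_self hp m

theorem add_one_ne_sub_one (hp : 3 ≤ p) (m : Fin p) : m + 1 ≠ m - 1 := fun h => by
  have := val_sub_one_sub_self (by omega) m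
  rw [← h, val_add_one_sub_self (by omega)] at this
  omega

theorem val_sub_of_not_cyclicallyClose (hp : 2 ≤ p) {m j : Fin p} (h : ¬CyclicallyClose m j) :
    1 < (j - m).val ∧ (j - m).val < p - 1 := by
  have hval (k : Fin p) (hk : (j - m).val = (k - m).val) : j = k :=
    sub_left_injective (Fin.val_injective hk)
  have h₀ : (j - m).val ≠ 0 := fun h₀ =>
    h (Or.inr (Or.inl (hval m (by rw [h₀, sub_self, Fin.val_zero]))))
  have h₁ : (j - m).val ≠ 1 := fun h₁ =>
    h (Or.inr (Or.inr (hval _ (by rw [h₁, val_add_one_sub_self hp]))))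
  have h₂ : (j - m).val ≠ p - 1 := fun h₂ =>
    h (Or.inl (hval _ (by rw [h₂, val_sub_one_sub_self hp])))
  have := (j - m).isLt
  omega

end Cyclic

section Polygon

variable {E : Type*} {χ : (Fin 3 → E) → ℤ} {p : ℕ} {x : Fin p → E}

theorem chi_eq_one_of_cyclic (hχ : IsChirotope χ)
    (halt : ∀ i j k : Fin p, i < j → j < k → χ ![x i, x j, x k] = 1) {i j k : Fin p}
    (hij : 0 < (j - i).val) (hjk : (j - i).val < (k - i).val) : χ ![x i, x j, x k] = 1 := by
  have hsub (a b : Fin p) : (a - b).val = a.val - b.val ∧ b ≤ a ∨ (a - b).val = p + a - b ∧ a < b :=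
    (le_or_gt b a).imp (fun h => ⟨Fin.sub_val_of_le h, h⟩) (fun h => ⟨Fin.coe_sub_iff_lt.2 h, h⟩)
  rcases hsub j i with ⟨hj, hji⟩ | ⟨hj, hji⟩ <;> rcases hsub k i with ⟨hk, hki⟩ | ⟨hk, hki⟩
  · exact halt i j k (by omega) (by omega)
  · rw [hχ.rotate]; exact halt k i j (by omega) (by omega)
  · omega
  · rw [← hχ.rotate]; exact halt j k i (by omega) (by omega)

variable [NeZero p] (hχ : IsChirotope χ) (hp : 3 ≤ p)
  (halt : ∀ i j k : Fin p, i < j → j < k → χ ![x i, x j, x k] = 1)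
include hχ hp halt

theorem chi_add_one_sub_one_eq_one (m : Fin p) : χ ![x m, x (m + 1), x (m - 1)] = 1 := by
  apply chi_eq_one_of_cyclic hχ halt
  · rw [val_add_one_sub_self (by omega)]; omega
  · rw [val_add_one_sub_self (by omega), val_sub_one_sub_self (by omega)]; omega

theorem chi_consecutive_eq_one (m : Fin p) : χ ![x m, x (m + 1), x (m + 1 + 1)] = 1 := by
  simpa [hχ.rotate] using chi_add_one_sub_one_eq_one hχ hp halt (m + 1)

theorem chi_star_eq_one {m j : Fin p} (hj : ¬CyclicallyClose m j) :
    χ ![x m, x (m + 1), x j] = 1 ∧ χ ![x m, x j, x (m - 1)] = 1 := by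
  obtain ⟨hj₁, hj₂⟩ := val_sub_of_not_cyclicallyClose (by omega) hj
  constructor <;> apply chi_eq_one_of_cyclic hχ halt
  · rw [val_add_one_sub_self (by omega)]; omega
  · rw [val_add_one_sub_self (by omega)]; omega
  · omega
  · rw [val_sub_one_sub_self (by omega)]; omega

theorem chi_pos_of_isAscent {e : E} {m j : Fin p}
    (hm : IsAscent (fun i => χ ![x i, x (i + 1), e]) m) (hj : ¬CyclicallyClose m j) :
    0 < χ ![x m, x j, e] := by
  obtain ⟨hbc, hcd⟩ := chi_star_eq_one hχ hp halt hj
  obtain ⟨h₁, h₂, h₃⟩ := hm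
  simp only [sub_add_cancel, hχ.swap_zero_one (x m) (x (m - 1))] at h₁ h₂ h₃
  have h := hχ.three_term_pos (a := x m) (b := x (m + 1)) (c := x j) (d := x (m - 1)) (e := e)
  rw [hbc, hcd, chi_add_one_sub_one_eq_one hχ hp halt] at h
  simp only [one_mul, mul_one] at h
  exact h (by linarith) (by linarith) (by omega)

theorem chi_neg_of_isAscent_neg {e : E} {m j : Fin p}
    (hm : IsAscent (fun i => -χ ![x i, x (i + 1), e]) m) (hj : ¬CyclicallyClose m j) :
    χ ![x m, x j, e] < 0 := by
  obtain ⟨hbc, hcd⟩ := chi_star_eq_one hχ hp halt hj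
  obtain ⟨h₁, h₂, h₃⟩ := hm
  simp only [sub_add_cancel, hχ.swap_zero_one (x m) (x (m - 1))] at h₁ h₂ h₃
  have h := hχ.three_term_neg (a := x m) (b := x (m + 1)) (c := x j) (d := x (m - 1)) (e := e)
  rw [hbc, hcd, chi_add_one_sub_one_eq_one hχ hp halt] at h
  simp only [one_mul, mul_one] at h
  exact h (by linarith) (by linarith) (by omega)

theorem cocircuit_apply_eq {c : E → ℤ} (hc : IsCocircuit χ c) {i : Fin p}
    (h₀ : c (x i) = 0) (h₁ : c (x (i + 1)) = 0) (h₂ : c (x (i + 1 + 1)) = 1) (y : E) :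
    c y = χ ![x i, x (i + 1), y] := by
  obtain ⟨a, b, hab⟩ := hχ.exists_eq_of_isCocircuit hc
  rw [hab] at h₀ h₁ h₂ ⊢
  exact hχ.eq_of_common_zeros h₀ h₁ h₂ (chi_consecutive_eq_one hχ hp halt i) y

theorem chi_add_one_ne_zero (hsimple : OMSimple χ) {e : E} (he : e ∉ Set.range x) {m : Fin p}
    (h : χ ![x m, x (m + 1), e] = 0) : χ ![x (m + 1), x (m + 1 + 1), e] ≠ 0 := by
  intro h'
  obtain ⟨y, hy⟩ := hχ.exists_ne_zero_of_omSimple hsimple (a := x (m + 1)) (b := e)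
    fun h'' => he ⟨m + 1, h''⟩
  refine hy (hχ.eq_zero_of_basis (u := x m) (v := x (m + 1 + 1)) (w := x (m + 1)) ?_ ?_ ?_ ?_ y)
  · rwa [hχ.rotate]
  · rw [hχ.swap_one_two, h', neg_zero]
  · exact hχ.eq_zero_of_repeat _ _
  · rw [hχ.swap_one_two, chi_consecutive_eq_one hχ hp halt]; decide

end Polygon

theorem BlockPattern.congr {f g : ℕ → ℤ} {p : ℕ} (hfg : ∀ k < p, f k = g k)
    (h : BlockPattern f p) : BlockPattern g p := by
  obtain ⟨a, b, hab, hbp, h⟩ := h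
  exact ⟨a, b, hab, hbp, fun k hk => by simpa only [hfg k hk] using h k hk⟩

section Combinatorics

open Fin.NatCast

variable {p : ℕ} [NeZero p] {s : Fin p → ℤ}

theorem cyclicallyClose_of_isAscent {u : Fin p → Fin p → ℤ} (hu : ∀ i j, u j i = -u i j)
    (hpos : ∀ m j, IsAscent s m → ¬CyclicallyClose m j → 0 < u m j) {m m' : Fin p}
    (hm : IsAscent s m) (hm' : IsAscent s m') : CyclicallyClose m m' := by
  by_contra h
  have h₁ := hpos m m' hm h
  have h₂ := hpos m' m hm' fun h' => h h'.symm
  rw [hu] at h₂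
  linarith

theorem isAscent_add_one (hzz : ∀ m, s m = 0 → s (m + 1) ≠ 0) {m : Fin p}
    (h₁ : s m ≤ 0) (h₂ : 0 ≤ s (m + 1)) : IsAscent s (m + 1) := by
  rw [IsAscent, add_sub_cancel_right]
  refine ⟨h₁, h₂, ?_⟩
  rcases h₁.lt_or_eq with h | h
  · linarith
  · exact h ▸ lt_of_le_of_ne h₂ (hzz m h).symm

theorem exists_isAscent_between (hzz : ∀ m, s m = 0 → s (m + 1) ≠ 0) {i j : ℕ} (hij : i < j)
    (hi : s (i : Fin p) ≤ 0) (hj : 0 ≤ s (j : Fin p)) :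
    ∃ k : ℕ, i < k ∧ k ≤ j ∧ IsAscent s (k : Fin p) := by
  induction j with
  | zero => omega
  | succ j ih =>
    by_cases h : s (j : Fin p) ≤ 0
    · refine ⟨j + 1, hij, le_rfl, ?_⟩
      push_cast at hj ⊢
      exact isAscent_add_one hzz h hj
    · have hij' : i < j := by
        rcases Nat.lt_succ_iff_lt_or_eq.1 hij with h' | rfl
        · exact h'
        · exact absurd hi h
      obtain ⟨k, hik, hkj, hk⟩ := ih hij' (le_of_not_ge h)
      exact ⟨k, hik, by omega, hk⟩

theorem not_cyclicallyClose_natCast {k₁ k₂ : ℕ} (h₁ : 1 ≤ k₁) (h₁₂ : k₁ + 2 ≤ k₂) (h₂ : k₂ < p) :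
    ¬CyclicallyClose (k₁ : Fin p) (k₂ : Fin p) := by
  have hinj {a b : ℕ} (ha : a < p) (hb : b < p) (h : (a : Fin p) = (b : Fin p)) : a = b := by
    simpa [Fin.val_cast_of_lt ha, Fin.val_cast_of_lt hb] using congrArg Fin.val h
  rintro (h | h | h)
  · obtain ⟨k, rfl⟩ : ∃ k, k₁ = k + 1 := ⟨k₁ - 1, by omega⟩
    rw [Nat.cast_add_one, add_sub_cancel_right] at h
    have := hinj h₂ (by omega) h
    omega
  · have := hinj h₂ (by omega) h
    omega
  · rw [← Nat.cast_add_one] at h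
    have := hinj h₂ (by omega) h
    omega

theorem lt_zero_of_between (hzz : ∀ m, s m = 0 → s (m + 1) ≠ 0)
    (hasc : ∀ m m', IsAscent s m → IsAscent s m' → CyclicallyClose m m')
    (hdesc : ∀ m m', IsAscent (-s) m → IsAscent (-s) m' → CyclicallyClose m m')
    (hbd : 0 < s 0 ∨ 0 < s (-1)) {a b : ℕ} (ha : s (a : Fin p) ≤ 0) (hb : s (b : Fin p) ≤ 0)
    (hbp : b < p) (hlt : ∀ k < a, 0 < s (k : Fin p)) (hgt : ∀ k, b < k → k < p → 0 < s (k : Fin p))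
    {k : ℕ} (hak : a < k) (hkb : k < b) : s (k : Fin p) < 0 := by
  have hzz' : ∀ m, (-s) m = 0 → (-s) (m + 1) ≠ 0 := by simpa using hzz
  by_contra! hk
  rcases hbd with h₀ | h₁
  · have ha₀ : a ≠ 0 := by rintro rfl; rw [Nat.cast_zero] at ha; omega
    have hdesc_a : IsAscent (-s) (a : Fin p) := by
      have hcast : ((a - 1 : ℕ) : Fin p) + 1 = (a : Fin p) := by
        rw [← Nat.cast_add_one, Nat.sub_add_cancel (by omega)]
      rw [← hcast] at ha ⊢
      exact isAscent_add_one hzz' (by simpa using (hlt (a - 1) (by omega)).le) (by simpa using ha)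
    obtain ⟨k', hkk', hk'b, hk'⟩ := exists_isAscent_between hzz' hkb
      (by simpa using hk) (by simpa using hb)
    exact not_cyclicallyClose_natCast (by omega) (by omega) (by omega) (hdesc _ _ hdesc_a hk')
  · have hbp' : b + 1 < p := by
      refine lt_of_le_of_ne hbp fun h => ?_
      have : (b : Fin p) + 1 = 0 := by rw [← Nat.cast_add_one, h, Fin.natCast_self]
      rw [eq_neg_of_add_eq_zero_left this] at hb
      omega
    have hasc_b : IsAscent s ((b + 1 : ℕ) : Fin p) := by
      have := hgt (b + 1) (by omega) hbp'
      rw [Nat.cast_add_one] at this ⊢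
      exact isAscent_add_one hzz hb this.le
    obtain ⟨k', hak', hk'k, hk'⟩ := exists_isAscent_between hzz hak ha hk
    exact not_cyclicallyClose_natCast (by omega) (by omega) (by omega) (hasc _ _ hk' hasc_b)

theorem blockPattern_of_pos (hval : ∀ m, s m = 1 ∨ s m = 0 ∨ s m = -1)
    (hzz : ∀ m, s m = 0 → s (m + 1) ≠ 0)
    (hasc : ∀ m m', IsAscent s m → IsAscent s m' → CyclicallyClose m m')
    (hdesc : ∀ m m', IsAscent (-s) m → IsAscent (-s) m' → CyclicallyClose m m')
    (hbd : 0 < s 0 ∨ 0 < s (-1)) :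
    BlockPattern (fun k : ℕ => s (k : Fin p)) p := by
  have hone {m : Fin p} (h : 0 < s m) : s m = 1 := by rcases hval m with h' | h' | h' <;> omega
  by_cases hS : ∃ k, k < p ∧ s (k : Fin p) ≤ 0
  swap
  · push Not at hS
    exact ⟨p, p, le_rfl, le_rfl, fun k hk =>
      ⟨fun _ => hone (hS k hk), fun h => absurd hk (by omega), fun h => absurd hk (by omega)⟩⟩
  classical
  obtain ⟨a, ⟨hap, ha⟩, hlt⟩ : ∃ a, (a < p ∧ s (a : Fin p) ≤ 0) ∧ ∀ k < a, 0 < s (k : Fin p) :=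
    ⟨Nat.find hS, Nat.find_spec hS, fun k hk => by
      have := Nat.find_min hS hk
      push Not at this
      exact this (hk.trans (Nat.find_spec hS).1)⟩
  obtain ⟨b, ⟨hab, hbp, hb⟩, hgt⟩ : ∃ b, (a ≤ b ∧ b < p ∧ s (b : Fin p) ≤ 0) ∧
      ∀ k, b < k → k < p → 0 < s (k : Fin p) := by
    set P : ℕ → Prop := fun k => s (k : Fin p) ≤ 0
    refine ⟨Nat.findGreatest P (p - 1), ⟨Nat.le_findGreatest (show a ≤ p - 1 by omega) ha,
      by have := Nat.findGreatest_le (P := P) (p - 1); omega,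
      Nat.findGreatest_spec (P := P) (show a ≤ p - 1 by omega) ha⟩, fun k hbk hk => ?_⟩
    exact lt_of_not_ge (Nat.findGreatest_is_greatest hbk (show k ≤ p - 1 by omega))
  have hmid (k : ℕ) (hak : a < k) (hkb : k < b) : s (k : Fin p) < 0 :=
    lt_zero_of_between hzz hasc hdesc hbd ha hb hbp hlt hgt hak hkb
  refine ⟨a, b, hab, by omega, fun k hk => ⟨fun h => hone (hlt k h), fun h₁ h₂ => ?_,
    fun h => hone (hgt k h hk)⟩⟩
  have hk0 : s (k : Fin p) ≤ 0 := by
    rcases h₁.lt_or_eq with h₁ | rfl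
    · rcases h₂.lt_or_eq with h₂ | rfl
      · exact (hmid k h₁ h₂).le
      · exact hb
    · exact ha
  rcases hval (k : Fin p) with h | h | h
  · omega
  · refine Or.inr ⟨h, ?_⟩
    by_contra! hne
    have := hmid k (by omega) (by omega)
    omega
  · exact Or.inl h

theorem blockPattern_or_blockPattern_neg (hval : ∀ m, s m = 1 ∨ s m = 0 ∨ s m = -1)
    (hzz : ∀ m, s m = 0 → s (m + 1) ≠ 0)
    (hasc : ∀ m m', IsAscent s m → IsAscent s m' → CyclicallyClose m m')
    (hdesc : ∀ m m', IsAscent (-s) m → IsAscent (-s) m' → CyclicallyClose m m') :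
    BlockPattern (fun k : ℕ => s (k : Fin p)) p ∨ BlockPattern (fun k : ℕ => -s (k : Fin p)) p := by
  by_cases hbd : 0 < s 0 ∨ 0 < s (-1)
  · exact Or.inl (blockPattern_of_pos hval hzz hasc hdesc hbd)
  refine Or.inr (blockPattern_of_pos (s := -s) ?_ (by simpa using hzz) (by simpa using hdesc)
    (by simpa using hasc) ?_)
  · intro m
    rcases hval m with h | h | h <;> simp [h]
  · push Not at hbd
    have h := hzz (-1)
    rw [neg_add_cancel] at h
    simp only [Pi.neg_apply, neg_pos]
    omega

end Combinatorics

theorem alternating_extension_cocircuit_sign_pattern_general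
    {E : Type*} (χ : (Fin 3 → E) → ℤ) (hχ : IsChirotope χ) (hsimple : OMSimple χ)
    (p : ℕ) [NeZero p] (hp : 3 ≤ p)
    (x : Fin p → E)
    (halt : ∀ i j k : Fin p, i < j → j < k → χ ![x i, x j, x k] = 1)
    (e : E) (he : e ∉ Set.range x)
    (V : Fin p → E → ℤ)
    (hV : ∀ i : Fin p, IsCocircuit χ (V i) ∧ V i (x i) = 0 ∧ V i (x (i + 1)) = 0 ∧
        ∀ j : Fin p, j ≠ i → j ≠ i + 1 → V i (x j) = 1) :
    BlockPattern (fun k => if h : k < p then V ⟨k, h⟩ e else 0) p ∨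
    BlockPattern (fun k => if h : k < p then -(V ⟨k, h⟩ e) else 0) p := by
  set s : Fin p → ℤ := fun i => χ ![x i, x (i + 1), e]
  have hVs (i : Fin p) : V i e = s i := by
    obtain ⟨hc, h₀, h₁, h₂⟩ := hV i
    refine cocircuit_apply_eq hχ hp halt hc h₀ h₁ (h₂ _ ?_ (add_one_ne_self (by omega) _)) e
    simpa using add_one_ne_sub_one hp (i + 1)
  have hzz (m : Fin p) (h : s m = 0) : s (m + 1) ≠ 0 :=
    chi_add_one_ne_zero hχ hp halt hsimple he h
  have hasc (m m' : Fin p) := cyclicallyClose_of_isAscent (s := s) (m := m) (m' := m')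
    (fun i j => hχ.swap_zero_one (x i) (x j) e) fun _ _ => chi_pos_of_isAscent hχ hp halt
  have hdesc (m m' : Fin p) := cyclicallyClose_of_isAscent (s := -s) (m := m) (m' := m')
    (u := fun i j => -χ ![x i, x j, e]) (fun i j => by simp only [hχ.swap_zero_one (x i) (x j) e])
    fun _ _ hm hj => neg_pos.2 (chi_neg_of_isAscent_neg hχ hp halt hm hj)
  rcases blockPattern_or_blockPattern_neg (fun m => hχ.1 _) hzz hasc hdesc with h | h
  · exact Or.inl (h.congr fun k hk => by simp [s, hVs, dif_pos hk, Fin.natCast_eq_mk hk])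
  · exact Or.inr (h.congr fun k hk => by simp [s, hVs, dif_pos hk, Fin.natCast_eq_mk hk])

/-- In a simple rank-3 oriented matroid, if `x₀,…,x_{p−1}` define an alternating
matroid in this order, `e` is an element outside them, and `V i` is the cocircuit
vanishing on `{x i, x (i+1)}` and positive on the other `x j`, then the cyclic sign
sequence `V 0 e, …, V (p−1) e` has at most one maximal block of `+`'s and one maximal
block of `−`'s, possibly separated by single zeros. -/
theorem alternating_extension_cocircuit_sign_pattern
    {E : Type*} (χ : (Fin 3 → E) → ℤ) (hχ : IsChirotope χ) (hsimple : OMSimple χ)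
    (p : ℕ) [NeZero p] (hp : 3 ≤ p)
    (x : Fin p → E) (hxinj : Function.Injective x)
    (halt : ∀ i j k : Fin p, i < j → j < k → χ ![x i, x j, x k] = 1)
    (e : E) (he : e ∉ Set.range x)
    (V : Fin p → E → ℤ)
    (hV : ∀ i : Fin p, IsCocircuit χ (V i) ∧ V i (x i) = 0 ∧ V i (x (i + 1)) = 0 ∧
        ∀ j : Fin p, j ≠ i → j ≠ i + 1 → V i (x j) = 1) :
    BlockPattern (fun k => if h : k < p then V ⟨k, h⟩ e else 0) p ∨
    BlockPattern (fun k => if h : k < p then -(V ⟨k, h⟩ e) else 0) p :=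
  alternating_extension_cocircuit_sign_pattern_general χ hχ hsimple p hp x halt e he V hV
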